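/- The map ψ: H⊗H → H⊗H, ψ(a⊗c) = α²(a₂₁) ⊗ (B(a₂₂)α⁻²(c))·A(S⁻¹(a₁)), satisfies the comultiplicativity axiom: _ψa ⊗ Δ(c^ψ) = α(_{φψ}α⁻¹(a)) ⊗ (c₁^φ ⊗ c₂^ψ), where legs of ψ and φ (both equal to ψ) are composed as indicated. -/

import Mathlib

open TensorProduct

/-- A monoidal Hom-Hopf algebra (with bijective antipode) over a field `k`. -/
structure HomHopf (k : Type*) [Field k] (H : Type*) [AddCommGroup H] [Module k H] where
  mul : H →ₗ[k] H →ₗ[k] H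
  one : H
  a : H ≃ₗ[k] H
  comul : H →ₗ[k] H ⊗[k] H
  counit : H →ₗ[k] k
  S : H ≃ₗ[k] H
  hom_assoc : ∀ x y z : H, mul (a x) (mul y z) = mul (mul x y) (a z)
  a_mul : ∀ x y : H, a (mul x y) = mul (a x) (a y)
  mul_one' : ∀ x : H, mul x one = a x
  one_mul' : ∀ x : H, mul one x = a x
  a_one : a one = one
  hom_coassoc : (TensorProduct.map a.symm.toLinearMap comul).comp comul
      = (TensorProduct.assoc k H H H).toLinearMap.comp
          ((TensorProduct.map comul a.symm.toLinearMap).comp comul)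
  comul_a : ∀ x : H, comul (a x) = TensorProduct.map a.toLinearMap a.toLinearMap (comul x)
  counit_comul : ∀ x : H,
    (TensorProduct.lid k H) ((TensorProduct.map counit LinearMap.id) (comul x)) = a.symm x
  comul_counit : ∀ x : H,
    (TensorProduct.rid k H) ((TensorProduct.map LinearMap.id counit) (comul x)) = a.symm x
  counit_a : ∀ x : H, counit (a x) = counit x
  comul_mul : ∀ x y : H, comul (mul x y)
      = (TensorProduct.map (TensorProduct.lift mul) (TensorProduct.lift mul))
          ((TensorProduct.tensorTensorTensorComm k H H H H) (comul x ⊗ₜ[k] comul y))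
  comul_one : comul one = one ⊗ₜ[k] one
  counit_mul : ∀ x y : H, counit (mul x y) = counit x * counit y
  counit_one : counit one = 1
  S_a : ∀ x : H, S (a x) = a (S x)
  antipode_left : ∀ x : H,
    (TensorProduct.lift mul) ((TensorProduct.map S.toLinearMap LinearMap.id) (comul x))
      = counit x • one
  antipode_right : ∀ x : H,
    (TensorProduct.lift mul) ((TensorProduct.map LinearMap.id S.toLinearMap) (comul x))
      = counit x • one

/-- A monoidal Hom-Hopf algebra automorphism. -/
structure IsHomHopfAuto {k : Type*} [Field k] {H : Type*} [AddCommGroup H] [Module k H]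
    (HH : HomHopf k H) (f : H ≃ₗ[k] H) : Prop where
  map_mul : ∀ x y : H, f (HH.mul x y) = HH.mul (f x) (f y)
  map_one : f HH.one = HH.one
  map_comul : ∀ x : H, HH.comul (f x)
      = TensorProduct.map f.toLinearMap f.toLinearMap (HH.comul x)
  map_counit : ∀ x : H, HH.counit (f x) = HH.counit x
  map_a : ∀ x : H, f (HH.a x) = HH.a (f x)

/-- A left-right (A,B)-Yetter-Drinfeld Hom-module over `HH`. -/
structure YDModule {k : Type*} [Field k] {H : Type*} [AddCommGroup H] [Module k H]
    (HH : HomHopf k H) (A B : H ≃ₗ[k] H)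
    (M : Type*) [AddCommGroup M] [Module k M] where
  act : H →ₗ[k] M →ₗ[k] M
  coact : M →ₗ[k] M ⊗[k] H
  mu : M ≃ₗ[k] M
  hom_act : ∀ (h g : H) (m : M), act (HH.a h) (act g m) = act (HH.mul h g) (mu m)
  mu_act : ∀ (h : H) (m : M), mu (act h m) = act (HH.a h) (mu m)
  one_act : ∀ m : M, act HH.one m = mu m
  hom_coact : (TensorProduct.map mu.symm.toLinearMap HH.comul).comp coact
      = (TensorProduct.assoc k M H H).toLinearMap.comp
          ((TensorProduct.map coact HH.a.symm.toLinearMap).comp coact)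
  coact_mu : ∀ m : M, coact (mu m)
      = TensorProduct.map mu.toLinearMap HH.a.toLinearMap (coact m)
  coact_counit : ∀ m : M,
    (TensorProduct.rid k M) ((TensorProduct.map LinearMap.id HH.counit) (coact m)) = mu.symm m
  compat : ∀ (h : H) (m : M) (n : ℕ) (h1 h2 : Fin n → H),
      HH.comul h = ∑ i, h1 i ⊗ₜ[k] h2 i →
      ∀ (p : ℕ) (h21 h22 : Fin n → Fin p → H),
      (∀ i, HH.comul (h2 i) = ∑ j, h21 i j ⊗ₜ[k] h22 i j) →
      ∀ (q : ℕ) (m0 : Fin q → M) (m1 : Fin q → H),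
      coact m = ∑ l, m0 l ⊗ₜ[k] m1 l →
      coact (act h m) = ∑ i, ∑ j, ∑ l,
        act (HH.a (h21 i j)) (m0 l) ⊗ₜ[k]
          HH.mul (HH.mul (B (h22 i j)) (HH.a.symm (m1 l))) (A (HH.S.symm (h1 i)))

/-! Write `Δ a = a₁ ⊗ a₂` in Sweedler notation. The left side is `α²(a₂₁) ⊗ Δ(t)` with
`t = (B(a₂₂)α⁻²c)·A(S⁻¹a₁)`; since `Δ` is multiplicative, `A`, `B`, `α` are comultiplicative and
`S⁻¹` is anti-comultiplicative, it is the image of `a₁₁ ⊗ a₁₂ ⊗ a₂₁ ⊗ a₂₂₁ ⊗ a₂₂₂` under a linear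
map built from `c₁ ⊗ c₂`. Unfolding ψ twice, the right side is the image of
`α⁻¹a₁ ⊗ αa₂₁₁ ⊗ α²a₂₁₂₁ ⊗ αa₂₁₂₂ ⊗ α⁻¹a₂₂` under the same map, and these two five-fold coproducts
agree by three applications of Hom-coassociativity.

That `S` is anti-comultiplicative is the usual convolution argument: `Δ ∘ S` is a left and
`x ↦ S x₂ ⊗ S x₁` a right convolution inverse of `Δ`. -/

namespace TensorProduct

variable {R M N : Type*} [CommSemiring R] [AddCommMonoid M] [AddCommMonoid N]
  [Module R M] [Module R N]

theorem exists_fin_sum_tmul (x : M ⊗[R] N) :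
    ∃ (n : ℕ) (f : Fin n → M) (g : Fin n → N), x = ∑ i, f i ⊗ₜ[R] g i := by
  obtain ⟨S, rfl⟩ := exists_finset x
  let e := S.equivFin.symm
  refine ⟨S.card, fun i => (e i : M × N).1, fun i => (e i : M × N).2, ?_⟩
  rw [← Finset.sum_coe_sort S, ← e.sum_comp]

theorem exists_fin_sum_tmul_family {ι : Type*} [Fintype ι] (t : ι → M ⊗[R] N) :
    ∃ (p : ℕ) (f : ι → Fin p → M) (g : ι → Fin p → N),
      ∀ i, t i = ∑ j, f i j ⊗ₜ[R] g i j := by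
  classical
  choose n f g hfg using fun i => exists_fin_sum_tmul (t i)
  refine ⟨Finset.univ.sup n, fun i j => if h : (j : ℕ) < n i then f i ⟨j, h⟩ else 0,
    fun i j => if h : (j : ℕ) < n i then g i ⟨j, h⟩ else 0, fun i => ?_⟩
  have hn : n i ≤ Finset.univ.sup n := Finset.le_sup (Finset.mem_univ i)
  rw [hfg i, ← Finset.sum_subset (Finset.subset_univ (Finset.univ.map (Fin.castLEEmb hn))),
    Finset.sum_map]
  · simp
  · intro j _ hj
    have : ¬ (j : ℕ) < n i := fun h => hj (Finset.mem_map.2 ⟨⟨j, h⟩, Finset.mem_univ _, rfl⟩)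
    simp [this]

theorem exists_fin_sum_tmul_family₂ {ι κ : Type*} [Fintype ι] [Fintype κ]
    (t : ι → κ → M ⊗[R] N) :
    ∃ (p : ℕ) (f : ι → κ → Fin p → M) (g : ι → κ → Fin p → N),
      ∀ i j, t i j = ∑ l, f i j l ⊗ₜ[R] g i j l := by
  obtain ⟨p, f, g, hfg⟩ := exists_fin_sum_tmul_family fun ij : ι × κ => t ij.1 ij.2
  exact ⟨p, fun i j => f (i, j), fun i j => g (i, j), fun i j => hfg (i, j)⟩

theorem exists_fin_sum_tmul_family₃ {ι κ μ : Type*} [Fintype ι] [Fintype κ] [Fintype μ]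
    (t : ι → κ → μ → M ⊗[R] N) :
    ∃ (p : ℕ) (f : ι → κ → μ → Fin p → M) (g : ι → κ → μ → Fin p → N),
      ∀ i j l, t i j l = ∑ r, f i j l r ⊗ₜ[R] g i j l r := by
  obtain ⟨p, f, g, hfg⟩ := exists_fin_sum_tmul_family₂ fun (ij : ι × κ) l => t ij.1 ij.2 l
  exact ⟨p, fun i j => f (i, j), fun i j => g (i, j), fun i j => hfg (i, j)⟩

theorem map_symm_map_apply {P Q : Type*} [AddCommMonoid P] [AddCommMonoid Q]
    [Module R P] [Module R Q] (e : M ≃ₗ[R] P) (f : N ≃ₗ[R] Q) (t : M ⊗[R] N) :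
    map e.symm.toLinearMap f.symm.toLinearMap (map e.toLinearMap f.toLinearMap t) = t :=
  (TensorProduct.congr e f).symm_apply_apply t

end TensorProduct

theorem Finset.sum_comm_innermost {α β γ M : Type*} [AddCommMonoid M] {s : Finset α}
    {t : Finset β} {u : Finset γ} (f : α → β → γ → M) :
    ∑ a ∈ s, ∑ b ∈ t, ∑ c ∈ u, f a b c = ∑ c ∈ u, ∑ a ∈ s, ∑ b ∈ t, f a b c :=
  (Finset.sum_congr rfl fun _ _ => Finset.sum_comm).trans Finset.sum_comm

namespace HomHopf

variable {k : Type*} [Field k] {H : Type*} [AddCommGroup H] [Module k H] (HH : HomHopf k H)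

lemma a_symm_mul (x y : H) :
    HH.a.symm (HH.mul x y) = HH.mul (HH.a.symm x) (HH.a.symm y) := by
  apply HH.a.injective
  rw [HH.a_mul, LinearEquiv.apply_symm_apply, LinearEquiv.apply_symm_apply,
    LinearEquiv.apply_symm_apply]

lemma a_symm_one : HH.a.symm HH.one = HH.one := by
  rw [LinearEquiv.symm_apply_eq, HH.a_one]

lemma S_a_symm (x : H) : HH.S (HH.a.symm x) = HH.a.symm (HH.S x) := by
  rw [LinearEquiv.eq_symm_apply, ← HH.S_a, LinearEquiv.apply_symm_apply]

lemma comul_a_symm (x : H) :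
    HH.comul (HH.a.symm x) = map HH.a.symm.toLinearMap HH.a.symm.toLinearMap (HH.comul x) := by
  conv_rhs => rw [← HH.a.apply_symm_apply x, HH.comul_a]
  exact (map_symm_map_apply HH.a HH.a _).symm

def IsComultiplicative (φ : H ≃ₗ[k] H) : Prop :=
  ∀ x, HH.comul (φ x) = map φ.toLinearMap φ.toLinearMap (HH.comul x)

lemma isComultiplicative_a : HH.IsComultiplicative HH.a := HH.comul_a

lemma isComultiplicative_a_symm : HH.IsComultiplicative HH.a.symm := HH.comul_a_symm

lemma comul_apply_sum {φ : H ≃ₗ[k] H} (hφ : HH.IsComultiplicative φ)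
    {ι : Type*} [Fintype ι] {z : H} {f g : ι → H} (hz : HH.comul z = ∑ i, f i ⊗ₜ[k] g i) :
    HH.comul (φ z) = ∑ i, φ (f i) ⊗ₜ[k] φ (g i) := by
  simp [hφ z, hz]

lemma counit_comul_sum {ι : Type*} [Fintype ι] {z : H} {f g : ι → H}
    (hz : HH.comul z = ∑ i, f i ⊗ₜ[k] g i) :
    ∑ i, HH.counit (f i) • g i = HH.a.symm z := by
  simpa [hz] using HH.counit_comul z

lemma comul_counit_sum {ι : Type*} [Fintype ι] {z : H} {f g : ι → H}
    (hz : HH.comul z = ∑ i, f i ⊗ₜ[k] g i) :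
    ∑ i, HH.counit (g i) • f i = HH.a.symm z := by
  simpa [hz] using HH.comul_counit z

lemma antipode_left_sum {ι : Type*} [Fintype ι] {z : H} {f g : ι → H}
    (hz : HH.comul z = ∑ i, f i ⊗ₜ[k] g i) :
    ∑ i, HH.mul (HH.S (f i)) (g i) = HH.counit z • HH.one := by
  simpa [hz] using HH.antipode_left z

lemma antipode_right_sum {ι : Type*} [Fintype ι] {z : H} {f g : ι → H}
    (hz : HH.comul z = ∑ i, f i ⊗ₜ[k] g i) :
    ∑ i, HH.mul (f i) (HH.S (g i)) = HH.counit z • HH.one := by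
  simpa [hz] using HH.antipode_right z

lemma hom_coassoc_sum {ι κ μ : Type*} [Fintype ι] [Fintype κ] [Fintype μ]
    {z : H} {f g : ι → H} (hz : HH.comul z = ∑ i, f i ⊗ₜ[k] g i)
    {f₁ f₂ : ι → κ → H} (hf : ∀ i, HH.comul (f i) = ∑ j, f₁ i j ⊗ₜ[k] f₂ i j)
    {g₁ g₂ : ι → μ → H} (hg : ∀ i, HH.comul (g i) = ∑ j, g₁ i j ⊗ₜ[k] g₂ i j) :
    ∑ i, ∑ j, f₁ i j ⊗ₜ[k] (f₂ i j ⊗ₜ[k] HH.a.symm (g i))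
      = ∑ i, ∑ j, HH.a.symm (f i) ⊗ₜ[k] (g₁ i j ⊗ₜ[k] g₂ i j) := by
  have h := LinearMap.congr_fun HH.hom_coassoc z
  simp only [LinearMap.comp_apply, LinearEquiv.coe_coe, hz, map_sum, map_tmul] at h
  simp only [hf, hg, sum_tmul, tmul_sum, map_sum] at h
  simpa using h.symm

noncomputable def mulTensor : (H ⊗[k] H) ⊗[k] (H ⊗[k] H) →ₗ[k] H ⊗[k] H :=
  map (lift HH.mul) (lift HH.mul) ∘ₗ (tensorTensorTensorComm k H H H H).toLinearMap

@[simp] lemma mulTensor_tmul (x y z w : H) :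
    HH.mulTensor ((x ⊗ₜ[k] y) ⊗ₜ[k] (z ⊗ₜ[k] w)) = HH.mul x z ⊗ₜ[k] HH.mul y w := rfl

lemma comul_mul_eq_mulTensor (x y : H) :
    HH.comul (HH.mul x y) = HH.mulTensor (HH.comul x ⊗ₜ[k] HH.comul y) :=
  HH.comul_mul x y

lemma mulTensor_assoc (u v w : H ⊗[k] H) :
    HH.mulTensor (map HH.a.toLinearMap HH.a.toLinearMap u ⊗ₜ[k] HH.mulTensor (v ⊗ₜ[k] w))
      = HH.mulTensor (HH.mulTensor (u ⊗ₜ[k] v) ⊗ₜ[k] map HH.a.toLinearMap HH.a.toLinearMap w) := by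
  induction u using TensorProduct.induction_on with
  | zero => simp
  | add u₁ u₂ h₁ h₂ => simp only [map_add, add_tmul, h₁, h₂]
  | tmul u₁ u₂ =>
    induction v using TensorProduct.induction_on with
    | zero => simp
    | add v₁ v₂ h₁ h₂ => simp only [add_tmul, tmul_add, map_add, h₁, h₂]
    | tmul v₁ v₂ =>
      induction w using TensorProduct.induction_on with
      | zero => simp
      | add w₁ w₂ h₁ h₂ => simp only [tmul_add, map_add, h₁, h₂]
      | tmul w₁ w₂ => simp [HH.hom_assoc]

lemma mulTensor_one_left (w : H ⊗[k] H) :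
    HH.mulTensor ((HH.one ⊗ₜ[k] HH.one) ⊗ₜ[k] w) = map HH.a.toLinearMap HH.a.toLinearMap w := by
  induction w using TensorProduct.induction_on with
  | zero => simp
  | add w₁ w₂ h₁ h₂ => simp only [tmul_add, map_add, h₁, h₂]
  | tmul w₁ w₂ => simp [HH.one_mul']

lemma mulTensor_one_right (w : H ⊗[k] H) :
    HH.mulTensor (w ⊗ₜ[k] (HH.one ⊗ₜ[k] HH.one)) = map HH.a.toLinearMap HH.a.toLinearMap w := by
  induction w using TensorProduct.induction_on with
  | zero => simp
  | add w₁ w₂ h₁ h₂ => simp only [add_tmul, map_add, h₁, h₂]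
  | tmul w₁ w₂ => simp [HH.mul_one']

noncomputable def conv (F G : H →ₗ[k] H ⊗[k] H) : H →ₗ[k] H ⊗[k] H :=
  HH.mulTensor ∘ₗ map F G ∘ₗ HH.comul

lemma conv_apply_of_comul_eq (F G : H →ₗ[k] H ⊗[k] H) {ι : Type*} [Fintype ι] {z : H}
    {f g : ι → H} (hz : HH.comul z = ∑ i, f i ⊗ₜ[k] g i) :
    HH.conv F G z = ∑ i, HH.mulTensor (F (f i) ⊗ₜ[k] G (g i)) := by
  simp [conv, hz]

noncomputable def unitCounit : H →ₗ[k] H ⊗[k] H := HH.counit.smulRight (HH.one ⊗ₜ[k] HH.one)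

@[simp] lemma unitCounit_apply (z : H) :
    HH.unitCounit z = HH.counit z • (HH.one ⊗ₜ[k] HH.one) := rfl

noncomputable def opComulS : H →ₗ[k] H ⊗[k] H :=
  map HH.S.toLinearMap HH.S.toLinearMap ∘ₗ (TensorProduct.comm k H H).toLinearMap ∘ₗ HH.comul

lemma opComulS_apply_of_comul_eq {ι : Type*} [Fintype ι] {z : H} {f g : ι → H}
    (hz : HH.comul z = ∑ i, f i ⊗ₜ[k] g i) :
    HH.opComulS z = ∑ i, HH.S (g i) ⊗ₜ[k] HH.S (f i) := by
  simp [opComulS, hz]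

def IsAEquivariant (F : H →ₗ[k] H ⊗[k] H) : Prop :=
  ∀ h : H, F (HH.a h) = map HH.a.toLinearMap HH.a.toLinearMap (F h)

variable {HH} in
lemma IsAEquivariant.apply_eq {F : H →ₗ[k] H ⊗[k] H} (hF : HH.IsAEquivariant F) (h : H) :
    F h = map HH.a.toLinearMap HH.a.toLinearMap (F (HH.a.symm h)) := by
  rw [← hF, LinearEquiv.apply_symm_apply]

lemma isAEquivariant_comul_comp_S : HH.IsAEquivariant (HH.comul ∘ₗ HH.S.toLinearMap) := by
  intro h
  simp [HH.S_a, HH.comul_a]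

lemma isAEquivariant_opComulS : HH.IsAEquivariant HH.opComulS := by
  intro h
  obtain ⟨n, f, g, hfg⟩ := exists_fin_sum_tmul (HH.comul h)
  rw [HH.opComulS_apply_of_comul_eq (HH.comul_apply_sum HH.isComultiplicative_a hfg),
    HH.opComulS_apply_of_comul_eq hfg]
  simp [HH.S_a]

lemma conv_unitCounit_left {F : H →ₗ[k] H ⊗[k] H} (hF : HH.IsAEquivariant F) :
    HH.conv HH.unitCounit F = F := by
  ext h
  obtain ⟨n, f, g, hfg⟩ := exists_fin_sum_tmul (HH.comul h)
  calc HH.conv HH.unitCounit F h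
      = map HH.a.toLinearMap HH.a.toLinearMap (F (∑ i, HH.counit (f i) • g i)) := by
        simp [HH.conv_apply_of_comul_eq _ _ hfg, ← smul_tmul', HH.mulTensor_one_left]
    _ = F h := by rw [HH.counit_comul_sum hfg, ← hF.apply_eq]

lemma conv_unitCounit_right {F : H →ₗ[k] H ⊗[k] H} (hF : HH.IsAEquivariant F) :
    HH.conv F HH.unitCounit = F := by
  ext h
  obtain ⟨n, f, g, hfg⟩ := exists_fin_sum_tmul (HH.comul h)
  calc HH.conv F HH.unitCounit h
      = map HH.a.toLinearMap HH.a.toLinearMap (F (∑ i, HH.counit (g i) • f i)) := by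
        simp [HH.conv_apply_of_comul_eq _ _ hfg, HH.mulTensor_one_right]
    _ = F h := by rw [HH.comul_counit_sum hfg, ← hF.apply_eq]

lemma conv_assoc {F K : H →ₗ[k] H ⊗[k] H} (G : H →ₗ[k] H ⊗[k] H) (hF : HH.IsAEquivariant F)
    (hK : HH.IsAEquivariant K) :
    HH.conv (HH.conv F G) K = HH.conv F (HH.conv G K) := by
  ext h
  obtain ⟨n, f, g, hfg⟩ := exists_fin_sum_tmul (HH.comul h)
  obtain ⟨p, f₁, f₂, hf⟩ := exists_fin_sum_tmul_family fun i => HH.comul (f i)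
  obtain ⟨q, g₁, g₂, hg⟩ := exists_fin_sum_tmul_family fun i => HH.comul (g i)
  let Λ : H ⊗[k] (H ⊗[k] H) →ₗ[k] H ⊗[k] H := HH.mulTensor ∘ₗ
    map (map HH.a.toLinearMap HH.a.toLinearMap ∘ₗ F) (HH.mulTensor ∘ₗ map G K)
  have key := congrArg Λ (HH.hom_coassoc_sum hfg hf hg)
  simp only [Λ, map_sum, LinearMap.comp_apply, map_tmul] at key
  calc HH.conv (HH.conv F G) K h
      = ∑ i, ∑ j, HH.mulTensor (map HH.a.toLinearMap HH.a.toLinearMap (F (f₁ i j))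
          ⊗ₜ[k] HH.mulTensor (G (f₂ i j) ⊗ₜ[k] K (HH.a.symm (g i)))) := by
        simp only [HH.conv_apply_of_comul_eq _ _ hfg, HH.conv_apply_of_comul_eq _ _ (hf _),
          sum_tmul, map_sum, HH.mulTensor_assoc, ← hK.apply_eq]
    _ = ∑ i, ∑ j, HH.mulTensor (map HH.a.toLinearMap HH.a.toLinearMap (F (HH.a.symm (f i)))
          ⊗ₜ[k] HH.mulTensor (G (g₁ i j) ⊗ₜ[k] K (g₂ i j))) := key
    _ = HH.conv F (HH.conv G K) h := by
        simp only [HH.conv_apply_of_comul_eq _ _ hfg, HH.conv_apply_of_comul_eq _ _ (hg _),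
          tmul_sum, map_sum, ← hF.apply_eq]

lemma conv_comul_comp_S_comul :
    HH.conv (HH.comul ∘ₗ HH.S.toLinearMap) HH.comul = HH.unitCounit := by
  ext h
  obtain ⟨n, f, g, hfg⟩ := exists_fin_sum_tmul (HH.comul h)
  calc HH.conv (HH.comul ∘ₗ HH.S.toLinearMap) HH.comul h
      = HH.comul (∑ i, HH.mul (HH.S (f i)) (g i)) := by
        simp [HH.conv_apply_of_comul_eq _ _ hfg, HH.comul_mul_eq_mulTensor]
    _ = HH.unitCounit h := by
        rw [HH.antipode_left_sum hfg, map_smul, HH.comul_one, unitCounit_apply]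

lemma sum_mul_S_a_tmul {ι κ : Type*} [Fintype ι] [Fintype κ] {z : H} {f g : ι → H}
    (hz : HH.comul z = ∑ i, f i ⊗ₜ[k] g i)
    {g₁ g₂ : ι → κ → H} (hg : ∀ i, HH.comul (g i) = ∑ j, g₁ i j ⊗ₜ[k] g₂ i j) :
    ∑ i, ∑ j, HH.mul (f i) (HH.S (HH.a (g₁ i j))) ⊗ₜ[k] g₂ i j
      = HH.one ⊗ₜ[k] HH.a.symm (HH.a.symm z) := by
  obtain ⟨p, f₁, f₂, hf⟩ := exists_fin_sum_tmul_family fun i => HH.comul (f i)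
  let Λ : H ⊗[k] (H ⊗[k] H) →ₗ[k] H ⊗[k] H :=
    map (HH.a.toLinearMap ∘ₗ lift HH.mul ∘ₗ map LinearMap.id HH.S.toLinearMap) LinearMap.id ∘ₗ
      (TensorProduct.assoc k H H H).symm.toLinearMap
  have key := congrArg Λ (HH.hom_coassoc_sum hz hf hg)
  simp only [Λ, map_sum, LinearMap.comp_apply, LinearEquiv.coe_coe, assoc_symm_tmul, map_tmul,
    LinearMap.id_coe, id_eq, lift.tmul] at key
  calc ∑ i, ∑ j, HH.mul (f i) (HH.S (HH.a (g₁ i j))) ⊗ₜ[k] g₂ i j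
      = ∑ i, ∑ j, HH.a (HH.mul (HH.a.symm (f i)) (HH.S (g₁ i j))) ⊗ₜ[k] g₂ i j := by
        simp only [HH.a_mul, LinearEquiv.apply_symm_apply, HH.S_a]
    _ = ∑ i, ∑ j, HH.a (HH.mul (f₁ i j) (HH.S (f₂ i j))) ⊗ₜ[k] HH.a.symm (g i) := key.symm
    _ = ∑ i, HH.a (HH.counit (f i) • HH.one) ⊗ₜ[k] HH.a.symm (g i) := by
        simp only [← sum_tmul, ← map_sum, HH.antipode_right_sum (hf _)]
    _ = HH.one ⊗ₜ[k] HH.a.symm (∑ i, HH.counit (f i) • g i) := by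
        simp [HH.a_one, smul_tmul, tmul_sum]
    _ = HH.one ⊗ₜ[k] HH.a.symm (HH.a.symm z) := by rw [HH.counit_comul_sum hz]

lemma conv_comul_opComulS : HH.conv HH.comul HH.opComulS = HH.unitCounit := by
  ext h
  obtain ⟨n, f, g, hfg⟩ := exists_fin_sum_tmul (HH.comul h)
  obtain ⟨p, f₁, f₂, hf⟩ := exists_fin_sum_tmul_family fun i => HH.comul (f i)
  obtain ⟨q, g₁, g₂, hg⟩ := exists_fin_sum_tmul_family fun i => HH.comul (g i)
  obtain ⟨r, G₁, G₂, hG⟩ := exists_fin_sum_tmul_family₂ fun i j => HH.comul (g₂ i j)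
  let Λ : H ⊗[k] (H ⊗[k] H) →ₗ[k] H ⊗[k] H := HH.mulTensor ∘ₗ
    map LinearMap.id (HH.opComulS ∘ₗ HH.a.toLinearMap) ∘ₗ
      (TensorProduct.assoc k H H H).symm.toLinearMap
  have key := congrArg Λ (HH.hom_coassoc_sum hfg hf hg)
  simp only [Λ, map_sum, LinearMap.comp_apply, LinearEquiv.coe_coe, assoc_symm_tmul, map_tmul,
    LinearMap.id_coe, id_eq, LinearEquiv.apply_symm_apply] at key
  let Ψ : H → H ⊗[k] H →ₗ[k] H ⊗[k] H := fun a => TensorProduct.comm k H H ∘ₗ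
    map LinearMap.id (HH.mul a ∘ₗ HH.S.toLinearMap ∘ₗ HH.a.toLinearMap)
  calc HH.conv HH.comul HH.opComulS h
      = ∑ i, ∑ j, HH.mulTensor ((f₁ i j ⊗ₜ[k] f₂ i j) ⊗ₜ[k] HH.opComulS (g i)) := by
        simp [HH.conv_apply_of_comul_eq _ _ hfg, hf, sum_tmul]
    _ = ∑ i, Ψ (HH.a.symm (f i))
          (∑ j, ∑ t, HH.mul (g₁ i j) (HH.S (HH.a (G₁ i j t))) ⊗ₜ[k] G₂ i j t) := by
        rw [key]
        simp [Ψ, tmul_sum,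
          HH.opComulS_apply_of_comul_eq (HH.comul_apply_sum HH.isComultiplicative_a (hG _ _))]
    _ = ∑ i, HH.mul (HH.a.symm (f i)) (HH.S (HH.a.symm (g i))) ⊗ₜ[k] HH.one := by
        refine Finset.sum_congr rfl fun i _ => ?_
        rw [HH.sum_mul_S_a_tmul (hg i) (hG i)]
        simp [Ψ]
    _ = HH.unitCounit h := by
        simp only [HH.S_a_symm, ← HH.a_symm_mul, ← sum_tmul, ← map_sum,
          HH.antipode_right_sum hfg, map_smul, HH.a_symm_one, unitCounit_apply, smul_tmul']

lemma comul_comp_S : HH.comul ∘ₗ HH.S.toLinearMap = HH.opComulS := by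
  have h := HH.conv_assoc HH.comul HH.isAEquivariant_comul_comp_S HH.isAEquivariant_opComulS
  rw [HH.conv_comul_comp_S_comul, HH.conv_comul_opComulS] at h
  rw [← HH.conv_unitCounit_right HH.isAEquivariant_comul_comp_S, ← h,
    HH.conv_unitCounit_left HH.isAEquivariant_opComulS]

lemma comul_S_symm_sum {ι : Type*} [Fintype ι] {z : H} {f g : ι → H}
    (hz : HH.comul z = ∑ i, f i ⊗ₜ[k] g i) :
    HH.comul (HH.S.symm z) = ∑ i, HH.S.symm (g i) ⊗ₜ[k] HH.S.symm (f i) := by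
  have h := LinearMap.congr_fun HH.comul_comp_S (HH.S.symm z)
  simp only [LinearMap.comp_apply, LinearEquiv.coe_coe, LinearEquiv.apply_symm_apply, opComulS] at h
  rw [← (TensorProduct.comm k H H).symm_apply_apply (HH.comul (HH.S.symm z)),
    ← map_symm_map_apply HH.S HH.S (TensorProduct.comm k H H (HH.comul (HH.S.symm z))), ← h, hz]
  simp

/-- The second leg of `ψ(x ⊗ κ)` is `twist A B κ x₂₂ x₁`. -/
noncomputable def twist (A B : H ≃ₗ[k] H) (κ : H) : H →ₗ[k] H →ₗ[k] H :=
  HH.mul.compl₁₂ (HH.mul.flip (HH.a.symm (HH.a.symm κ)) ∘ₗ B.toLinearMap)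
    (A.toLinearMap ∘ₗ HH.S.symm.toLinearMap)

@[simp] lemma twist_apply (A B : H ≃ₗ[k] H) (κ l m : H) :
    HH.twist A B κ l m
      = HH.mul (HH.mul (B l) (HH.a.symm (HH.a.symm κ))) (A (HH.S.symm m)) := rfl

lemma comul_twist {A B : H ≃ₗ[k] H} (hA : HH.IsComultiplicative A)
    (hB : HH.IsComultiplicative B) {ι κ μ : Type*} [Fintype ι] [Fintype κ] [Fintype μ]
    {c l m : H} {c₁ c₂ : ι → H} (hc : HH.comul c = ∑ i, c₁ i ⊗ₜ[k] c₂ i)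
    {l₁ l₂ : κ → H} (hl : HH.comul l = ∑ s, l₁ s ⊗ₜ[k] l₂ s)
    {m₁ m₂ : μ → H} (hm : HH.comul m = ∑ t, m₁ t ⊗ₜ[k] m₂ t) :
    HH.comul (HH.twist A B c l m) = ∑ i, ∑ s, ∑ t,
      HH.twist A B (c₁ i) (l₁ s) (m₂ t) ⊗ₜ[k] HH.twist A B (c₂ i) (l₂ s) (m₁ t) := by
  have hc' := HH.comul_apply_sum HH.isComultiplicative_a_symm
    (HH.comul_apply_sum HH.isComultiplicative_a_symm hc)
  rw [twist_apply, HH.comul_mul_eq_mulTensor, HH.comul_mul_eq_mulTensor,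
    HH.comul_apply_sum hB hl, hc', HH.comul_apply_sum hA (HH.comul_S_symm_sum hm)]
  simp only [sum_tmul, tmul_sum, map_sum, mulTensor_tmul, twist_apply]
  rw [Finset.sum_comm]
  exact Finset.sum_congr rfl fun _ _ => Finset.sum_comm

lemma hom_coassoc₄_sum {ι σ τ υ ν : Type*} [Fintype ι] [Fintype σ] [Fintype τ] [Fintype υ]
    [Fintype ν] {y : H} {y₁ y₂ : ι → H} (hy : HH.comul y = ∑ j, y₁ j ⊗ₜ[k] y₂ j)
    {z₁ z₂ : ι → σ → H} (hz : ∀ j, HH.comul (y₂ j) = ∑ s, z₁ j s ⊗ₜ[k] z₂ j s)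
    {w₁ w₂ : ι → σ → τ → H} (hw : ∀ j s, HH.comul (z₂ j s) = ∑ t, w₁ j s t ⊗ₜ[k] w₂ j s t)
    {g₁ g₂ : ι → υ → H} (hg : ∀ j, HH.comul (y₁ j) = ∑ u, g₁ j u ⊗ₜ[k] g₂ j u)
    {h₁ h₂ : ι → υ → ν → H} (hh : ∀ j u, HH.comul (g₂ j u) = ∑ v, h₁ j u v ⊗ₜ[k] h₂ j u v) :
    ∑ j, ∑ s, ∑ t, y₁ j ⊗ₜ[k] (z₁ j s ⊗ₜ[k] (w₁ j s t ⊗ₜ[k] w₂ j s t))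
      = ∑ j, ∑ u, ∑ v, HH.a (g₁ j u) ⊗ₜ[k]
          (HH.a (h₁ j u v) ⊗ₜ[k] (h₂ j u v ⊗ₜ[k] HH.a.symm (HH.a.symm (y₂ j)))) := by
  obtain ⟨r, q₁, q₂, hq⟩ := exists_fin_sum_tmul_family₂ fun j s => HH.comul (z₁ j s)
  have inner : ∀ j, ∑ s, ∑ t, y₁ j ⊗ₜ[k] (z₁ j s ⊗ₜ[k] (w₁ j s t ⊗ₜ[k] w₂ j s t))
      = ∑ s, ∑ l, y₁ j ⊗ₜ[k] (HH.a (q₁ j s l) ⊗ₜ[k] (q₂ j s l ⊗ₜ[k] HH.a.symm (z₂ j s))) := by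
    intro j
    have key := congrArg (TensorProduct.mk k H _ (y₁ j) ∘ₗ map HH.a.toLinearMap LinearMap.id)
      (HH.hom_coassoc_sum (hz j) (hq j) (hw j))
    simpa using key.symm
  have outer := congrArg (map HH.a.toLinearMap ((TensorProduct.assoc k H H H).toLinearMap ∘ₗ
      map (map HH.a.toLinearMap LinearMap.id ∘ₗ HH.comul) HH.a.symm.toLinearMap))
    (HH.hom_coassoc_sum hy hg hz)
  simp only [map_sum, LinearMap.comp_apply, map_tmul, hh, hq, sum_tmul, tmul_sum,
    LinearMap.id_coe, id_eq, LinearEquiv.coe_coe, assoc_tmul, LinearEquiv.apply_symm_apply] at outer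
  rw [Finset.sum_congr rfl fun j _ => inner j, ← outer]

lemma hom_coassoc₅_sum {ι τ κ σ υ ν : Type*} [Fintype ι] [Fintype τ] [Fintype κ] [Fintype σ]
    [Fintype υ] [Fintype ν] {x : H} {x₁ x₂ : ι → H} (hx : HH.comul x = ∑ i, x₁ i ⊗ₜ[k] x₂ i)
    {e₁ e₂ : ι → τ → H} (he : ∀ i, HH.comul (x₁ i) = ∑ t, e₁ i t ⊗ₜ[k] e₂ i t)
    {y₁ y₂ : ι → κ → H} (hy : ∀ i, HH.comul (x₂ i) = ∑ j, y₁ i j ⊗ₜ[k] y₂ i j)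
    {z₁ z₂ : ι → κ → σ → H} (hz : ∀ i j, HH.comul (y₂ i j) = ∑ s, z₁ i j s ⊗ₜ[k] z₂ i j s)
    {g₁ g₂ : ι → κ → υ → H} (hg : ∀ i j, HH.comul (y₁ i j) = ∑ u, g₁ i j u ⊗ₜ[k] g₂ i j u)
    {h₁ h₂ : ι → κ → υ → ν → H}
    (hh : ∀ i j u, HH.comul (g₂ i j u) = ∑ v, h₁ i j u v ⊗ₜ[k] h₂ i j u v) :
    ∑ i, ∑ j, ∑ s, ∑ t, (e₁ i t ⊗ₜ[k] e₂ i t) ⊗ₜ[k] (y₁ i j ⊗ₜ[k] (z₁ i j s ⊗ₜ[k] z₂ i j s))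
      = ∑ i, ∑ j, ∑ u, ∑ v, (HH.a.symm (x₁ i) ⊗ₜ[k] HH.a (g₁ i j u)) ⊗ₜ[k]
          (HH.a (HH.a (h₁ i j u v)) ⊗ₜ[k] (HH.a (h₂ i j u v) ⊗ₜ[k] HH.a.symm (y₂ i j))) := by
  obtain ⟨r, w₁, w₂, hw⟩ := exists_fin_sum_tmul_family₃ fun i j s => HH.comul (z₂ i j s)
  have key := congrArg
    (map LinearMap.id (map LinearMap.id HH.comul ∘ₗ HH.comul ∘ₗ HH.a.toLinearMap) ∘ₗ
      (TensorProduct.assoc k H H H).symm.toLinearMap)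
    (HH.hom_coassoc_sum hx he hy)
  simp only [map_sum, LinearMap.comp_apply, LinearEquiv.coe_coe, assoc_symm_tmul, map_tmul,
    LinearMap.id_coe, id_eq, LinearEquiv.apply_symm_apply, HH.comul_a, hy, hz, hw,
    tmul_sum] at key
  calc ∑ i, ∑ j, ∑ s, ∑ t, (e₁ i t ⊗ₜ[k] e₂ i t) ⊗ₜ[k] (y₁ i j ⊗ₜ[k] (z₁ i j s ⊗ₜ[k] z₂ i j s))
      = ∑ i, ∑ t, ∑ j, ∑ s,
          (e₁ i t ⊗ₜ[k] e₂ i t) ⊗ₜ[k] (y₁ i j ⊗ₜ[k] (z₁ i j s ⊗ₜ[k] z₂ i j s)) :=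
        Finset.sum_congr rfl fun i _ => Finset.sum_comm_innermost _
    _ = ∑ i, ∑ j, ∑ s, ∑ t, (HH.a.symm (x₁ i) ⊗ₜ[k] y₁ i j) ⊗ₜ[k]
          (HH.a (z₁ i j s) ⊗ₜ[k] (HH.a (w₁ i j s t) ⊗ₜ[k] HH.a (w₂ i j s t))) := key
    _ = _ := by
        refine Finset.sum_congr rfl fun i _ => ?_
        have key' := congrArg
          ((TensorProduct.assoc k H H (H ⊗[k] (H ⊗[k] H))).symm.toLinearMap ∘ₗ
            TensorProduct.mk k H _ (HH.a.symm (x₁ i)) ∘ₗ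
            map LinearMap.id (map HH.a.toLinearMap (map HH.a.toLinearMap HH.a.toLinearMap)))
          (HH.hom_coassoc₄_sum (hy i) (hz i) (hw i) (hg i) (hh i))
        simpa using key'

lemma sum_tmul_comul_twist {A B : H ≃ₗ[k] H} (hA : HH.IsComultiplicative A)
    (hB : HH.IsComultiplicative B) {ι κ υ ν μ : Type*} [Fintype ι] [Fintype κ] [Fintype υ]
    [Fintype ν] [Fintype μ] {x c : H} {x₁ x₂ : ι → H} (hx : HH.comul x = ∑ i, x₁ i ⊗ₜ[k] x₂ i)
    {y₁ y₂ : ι → κ → H} (hy : ∀ i, HH.comul (x₂ i) = ∑ j, y₁ i j ⊗ₜ[k] y₂ i j)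
    {g₁ g₂ : ι → κ → υ → H} (hg : ∀ i j, HH.comul (y₁ i j) = ∑ u, g₁ i j u ⊗ₜ[k] g₂ i j u)
    {h₁ h₂ : ι → κ → υ → ν → H}
    (hh : ∀ i j u, HH.comul (g₂ i j u) = ∑ v, h₁ i j u v ⊗ₜ[k] h₂ i j u v)
    {c₁ c₂ : μ → H} (hc : HH.comul c = ∑ l, c₁ l ⊗ₜ[k] c₂ l) :
    ∑ i, ∑ j, HH.a (HH.a (y₁ i j)) ⊗ₜ[k] HH.comul (HH.twist A B c (y₂ i j) (x₁ i))
      = ∑ l, ∑ i, ∑ j, ∑ u, ∑ v, HH.a (HH.a (HH.a (HH.a (h₁ i j u v)))) ⊗ₜ[k]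
          (HH.twist A B (c₁ l) (HH.a (h₂ i j u v)) (HH.a (g₁ i j u)) ⊗ₜ[k]
            HH.twist A B (c₂ l) (HH.a.symm (y₂ i j)) (HH.a.symm (x₁ i))) := by
  obtain ⟨pe, e₁, e₂, he⟩ := exists_fin_sum_tmul_family fun i => HH.comul (x₁ i)
  obtain ⟨pz, z₁, z₂, hz⟩ := exists_fin_sum_tmul_family₂ fun i j => HH.comul (y₂ i j)
  let Φ : μ → (H ⊗[k] H) ⊗[k] (H ⊗[k] (H ⊗[k] H)) →ₗ[k] H ⊗[k] (H ⊗[k] H) := fun l =>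
    map (HH.a.toLinearMap ∘ₗ HH.a.toLinearMap)
        (map (lift (HH.twist A B (c₁ l))) (lift (HH.twist A B (c₂ l)))) ∘ₗ
      map LinearMap.id (tensorTensorTensorComm k H H H H).toLinearMap ∘ₗ
      (TensorProduct.assoc k H (H ⊗[k] H) (H ⊗[k] H)).toLinearMap ∘ₗ
      (TensorProduct.comm k (H ⊗[k] H) (H ⊗[k] (H ⊗[k] H))).toLinearMap ∘ₗ
      map (TensorProduct.comm k H H).toLinearMap LinearMap.id
  have hΦ : ∀ l (a₁ a₂ a₃ a₄ a₅ : H), Φ l ((a₁ ⊗ₜ[k] a₂) ⊗ₜ[k] (a₃ ⊗ₜ[k] (a₄ ⊗ₜ[k] a₅)))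
      = HH.a (HH.a a₃) ⊗ₜ[k] (HH.twist A B (c₁ l) a₄ a₂ ⊗ₜ[k] HH.twist A B (c₂ l) a₅ a₁) := by
    intro l a₁ a₂ a₃ a₄ a₅
    simp [Φ, -twist_apply]
  calc ∑ i, ∑ j, HH.a (HH.a (y₁ i j)) ⊗ₜ[k] HH.comul (HH.twist A B c (y₂ i j) (x₁ i))
      = ∑ i, ∑ j, ∑ l, ∑ s, ∑ t, HH.a (HH.a (y₁ i j)) ⊗ₜ[k]
          (HH.twist A B (c₁ l) (z₁ i j s) (e₂ i t) ⊗ₜ[k]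
            HH.twist A B (c₂ l) (z₂ i j s) (e₁ i t)) := by
        simp only [HH.comul_twist hA hB hc (hz _ _) (he _), tmul_sum]
    _ = ∑ l, ∑ i, ∑ j, ∑ s, ∑ t, HH.a (HH.a (y₁ i j)) ⊗ₜ[k]
          (HH.twist A B (c₁ l) (z₁ i j s) (e₂ i t) ⊗ₜ[k]
            HH.twist A B (c₂ l) (z₂ i j s) (e₁ i t)) :=
        Finset.sum_comm_innermost _
    _ = ∑ l, Φ l (∑ i, ∑ j, ∑ s, ∑ t,
          (e₁ i t ⊗ₜ[k] e₂ i t) ⊗ₜ[k] (y₁ i j ⊗ₜ[k] (z₁ i j s ⊗ₜ[k] z₂ i j s))) := by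
        simp only [map_sum, hΦ]
    _ = ∑ l, Φ l (∑ i, ∑ j, ∑ u, ∑ v, (HH.a.symm (x₁ i) ⊗ₜ[k] HH.a (g₁ i j u)) ⊗ₜ[k]
          (HH.a (HH.a (h₁ i j u v)) ⊗ₜ[k] (HH.a (h₂ i j u v) ⊗ₜ[k] HH.a.symm (y₂ i j)))) := by
        rw [HH.hom_coassoc₅_sum hx he hy hz hg hh]
    _ = _ := by
        simp only [map_sum, hΦ]

def IsPsiMap (A B : H ≃ₗ[k] H) (psi : H ⊗[k] H →ₗ[k] H ⊗[k] H) : Prop :=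
  ∀ (x c : H) (n : ℕ) (x1 x2 : Fin n → H), HH.comul x = ∑ i, x1 i ⊗ₜ[k] x2 i →
    ∀ (p : ℕ) (x21 x22 : Fin n → Fin p → H),
      (∀ i, HH.comul (x2 i) = ∑ j, x21 i j ⊗ₜ[k] x22 i j) →
      psi (x ⊗ₜ[k] c) = ∑ i, ∑ j, HH.a (HH.a (x21 i j)) ⊗ₜ[k] HH.twist A B c (x22 i j) (x1 i)

variable {HH} in
lemma IsPsiMap.sum_tmul_psi_psi {A B : H ≃ₗ[k] H} {psi : H ⊗[k] H →ₗ[k] H ⊗[k] H}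
    (hψ : HH.IsPsiMap A B psi) {n p q r : ℕ} {x : H} {x₁ x₂ : Fin n → H}
    (hx : HH.comul x = ∑ i, x₁ i ⊗ₜ[k] x₂ i)
    {y₁ y₂ : Fin n → Fin p → H} (hy : ∀ i, HH.comul (x₂ i) = ∑ j, y₁ i j ⊗ₜ[k] y₂ i j)
    {g₁ g₂ : Fin n → Fin p → Fin q → H}
    (hg : ∀ i j, HH.comul (y₁ i j) = ∑ u, g₁ i j u ⊗ₜ[k] g₂ i j u)
    {h₁ h₂ : Fin n → Fin p → Fin q → Fin r → H}
    (hh : ∀ i j u, HH.comul (g₂ i j u) = ∑ v, h₁ i j u v ⊗ₜ[k] h₂ i j u v)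
    {ι τ : Type*} [Fintype ι] [Fintype τ] {c₁ c₂ : H} {P Q : ι → H}
    (hPQ : psi (HH.a.symm x ⊗ₜ[k] c₂) = ∑ l, P l ⊗ₜ[k] Q l) {R T : ι → τ → H}
    (hRT : ∀ l, psi (P l ⊗ₜ[k] c₁) = ∑ t, R l t ⊗ₜ[k] T l t) :
    ∑ l, ∑ t, HH.a (R l t) ⊗ₜ[k] (T l t ⊗ₜ[k] Q l)
      = ∑ i, ∑ j, ∑ u, ∑ v, HH.a (HH.a (HH.a (HH.a (h₁ i j u v)))) ⊗ₜ[k]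
          (HH.twist A B c₁ (HH.a (h₂ i j u v)) (HH.a (g₁ i j u)) ⊗ₜ[k]
            HH.twist A B c₂ (HH.a.symm (y₂ i j)) (HH.a.symm (x₁ i))) := by
  let f : H ⊗[k] H →ₗ[k] H ⊗[k] (H ⊗[k] H) := (TensorProduct.assoc k H H H).toLinearMap ∘ₗ
    map (map HH.a.toLinearMap LinearMap.id ∘ₗ psi ∘ₗ (TensorProduct.mk k H H).flip c₁)
      LinearMap.id
  have hf : ∀ a b, f (a ⊗ₜ[k] b) = TensorProduct.assoc k H H H
      (map HH.a.toLinearMap LinearMap.id (psi (a ⊗ₜ[k] c₁)) ⊗ₜ[k] b) :=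
    fun _ _ => rfl
  calc ∑ l, ∑ t, HH.a (R l t) ⊗ₜ[k] (T l t ⊗ₜ[k] Q l)
      = f (psi (HH.a.symm x ⊗ₜ[k] c₂)) := by
        rw [hPQ, map_sum]
        refine Finset.sum_congr rfl fun l _ => ?_
        simp [hf, hRT, sum_tmul]
    _ = ∑ i, ∑ j, f (HH.a (y₁ i j) ⊗ₜ[k]
          HH.twist A B c₂ (HH.a.symm (y₂ i j)) (HH.a.symm (x₁ i))) := by
        rw [hψ _ _ _ _ _ (HH.comul_apply_sum HH.isComultiplicative_a_symm hx) _ _ _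
          fun i => HH.comul_apply_sum HH.isComultiplicative_a_symm (hy i)]
        simp only [map_sum, LinearEquiv.apply_symm_apply]
    _ = _ := by
        refine Finset.sum_congr rfl fun i _ => Finset.sum_congr rfl fun j _ => ?_
        rw [hf, hψ _ _ _ _ _ (HH.comul_apply_sum HH.isComultiplicative_a (hg i j)) _ _ _
          fun u => HH.comul_apply_sum HH.isComultiplicative_a (hh i j u)]
        simp [sum_tmul, -twist_apply]

end HomHopf

/-- The map ψ(a⊗c) = α²(a₂₁) ⊗ (B(a₂₂)α⁻²(c))·A(S⁻¹(a₁)) satisfies the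
comultiplicativity axiom (2.5): _ψa ⊗ Δ(c^ψ) = α(_{φψ}α⁻¹(a)) ⊗ (c₁^φ ⊗ c₂^ψ). -/
theorem stmt_7 {k : Type*} [Field k] {H : Type*} [AddCommGroup H] [Module k H]
    (HH : HomHopf k H) (A B : H ≃ₗ[k] H)
    (hA : IsHomHopfAuto HH A) (hB : IsHomHopfAuto HH B)
    (psi : H ⊗[k] H →ₗ[k] H ⊗[k] H)
    (hpsi : ∀ (x c : H) (n : ℕ) (x1 x2 : Fin n → H),
      HH.comul x = ∑ i, x1 i ⊗ₜ[k] x2 i →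
      ∀ (p : ℕ) (x21 x22 : Fin n → Fin p → H),
      (∀ i, HH.comul (x2 i) = ∑ j, x21 i j ⊗ₜ[k] x22 i j) →
      psi (x ⊗ₜ[k] c) = ∑ i, ∑ j,
        HH.a (HH.a (x21 i j)) ⊗ₜ[k]
          HH.mul (HH.mul (B (x22 i j)) (HH.a.symm (HH.a.symm c))) (A (HH.S.symm (x1 i)))) :
    ∀ (x c : H) (n : ℕ) (u v : Fin n → H),
      psi (x ⊗ₜ[k] c) = ∑ i, u i ⊗ₜ[k] v i →
      ∀ (m : ℕ) (c1 c2 : Fin m → H),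
      HH.comul c = ∑ j, c1 j ⊗ₜ[k] c2 j →
      ∀ (p : ℕ) (P Q : Fin m → Fin p → H),
      (∀ j, psi (HH.a.symm x ⊗ₜ[k] c2 j) = ∑ l, P j l ⊗ₜ[k] Q j l) →
      ∀ (r : ℕ) (R T : Fin m → Fin p → Fin r → H),
      (∀ j l, psi (P j l ⊗ₜ[k] c1 j) = ∑ t, R j l t ⊗ₜ[k] T j l t) →
      (∑ i, u i ⊗ₜ[k] HH.comul (v i))
        = ∑ j, ∑ l, ∑ t, HH.a (R j l t) ⊗ₜ[k] (T j l t ⊗ₜ[k] Q j l) := by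
  intro x c n u v huv m c1 c2 hc p P Q hPQ r R T hRT
  have hψ : HH.IsPsiMap A B psi := hpsi
  obtain ⟨n₀, x₁, x₂, hx⟩ := exists_fin_sum_tmul (HH.comul x)
  obtain ⟨p₀, y₁, y₂, hy⟩ := exists_fin_sum_tmul_family fun i => HH.comul (x₂ i)
  obtain ⟨q₀, g₁, g₂, hg⟩ := exists_fin_sum_tmul_family₂ fun i j => HH.comul (y₁ i j)
  obtain ⟨r₀, h₁, h₂, hh⟩ := exists_fin_sum_tmul_family₃ fun i j u => HH.comul (g₂ i j u)
  have hL : ∑ i, u i ⊗ₜ[k] HH.comul (v i)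
      = ∑ i, ∑ j, HH.a (HH.a (y₁ i j)) ⊗ₜ[k] HH.comul (HH.twist A B c (y₂ i j) (x₁ i)) := by
    simpa [hψ _ _ _ _ _ hx _ _ _ hy, -HomHopf.twist_apply] using
      (congrArg (map LinearMap.id HH.comul) huv).symm
  rw [hL, HH.sum_tmul_comul_twist hA.map_comul hB.map_comul hx hy hg hh hc]
  exact Finset.sum_congr rfl fun l _ => (hψ.sum_tmul_psi_psi hx hy hg hh (hPQ l) (hRT l)).symm
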